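/- arXiv:math/0305177 — 3 statements merged into one kernel-verified Lean document; each statement's English description precedes it below -/
import Mathlib

section
/- Let f, g : [0, π/2] → ℝ be C² functions with f(0) = g(0) = 1, f'(0) = g'(0) = 0, f'' + a(s)·f = 0 with a(s) ≤ 1, g'' + g = 0, and f, g > 0 on [0, s₁] for some 0 < s₁ ≤ π/2. If f(s₁) = g(s₁), then a(s) = 1 and f(s) = g(s) for all s ∈ [0, s₁]. -/
/-!
For the Wronskian `W = f g' - f' g` the two equations give `W' = (a - 1) f g ≤ 0` on `[0, s₁]`,
and `W 0 = 0`, so `W ≤ 0` there. Since `(g / f)' = W / f²`, the quotient `g / f` is antitone on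
`[0, s₁]`; it equals `1` at both ends, hence everywhere, so `f = g`. Then `f'' = g''`, and
comparing the two equations gives `a = 1`.
-/

open Set

noncomputable def wronskian (f g : ℝ → ℝ) (x : ℝ) : ℝ :=
  f x * deriv g x - deriv f x * g x

lemma hasDerivAt_wronskian {f g : ℝ → ℝ} {x : ℝ} (hf : DifferentiableAt ℝ f x)
    (hg : DifferentiableAt ℝ g x) (hf' : DifferentiableAt ℝ (deriv f) x)
    (hg' : DifferentiableAt ℝ (deriv g) x) :
    HasDerivAt (wronskian f g) (f x * deriv (deriv g) x - deriv (deriv f) x * g x) x :=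
  ((hf.hasDerivAt.mul hg'.hasDerivAt).sub (hf'.hasDerivAt.mul hg.hasDerivAt)).congr_deriv
    (by ring)

lemma hasDerivAt_div_wronskian {f g : ℝ → ℝ} {x : ℝ} (hf : DifferentiableAt ℝ f x)
    (hg : DifferentiableAt ℝ g x) (hx : f x ≠ 0) :
    HasDerivAt (fun y => g y / f y) (wronskian f g x / f x ^ 2) x :=
  (hg.hasDerivAt.div hf.hasDerivAt hx).congr_deriv (by unfold wronskian; ring)

lemma wronskian_nonpos_of_le {f g : ℝ → ℝ} {a b : ℝ} (hf : ContDiff ℝ 2 f)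
    (hg : ContDiff ℝ 2 g) (ha : wronskian f g a = 0)
    (hfg : ∀ x ∈ Ioo a b, f x * deriv (deriv g) x ≤ deriv (deriv f) x * g x) :
    ∀ x ∈ Icc a b, wronskian f g x ≤ 0 := by
  have hW (x : ℝ) := hasDerivAt_wronskian (hf.differentiable two_ne_zero x)
    (hg.differentiable two_ne_zero x) (hf.differentiable_deriv_two x)
    (hg.differentiable_deriv_two x)
  have hanti : AntitoneOn (wronskian f g) (Icc a b) := by
    refine antitoneOn_of_hasDerivWithinAt_nonpos (convex_Icc a b)
      (fun x _ => (hW x).continuousAt.continuousWithinAt) (fun x _ => (hW x).hasDerivWithinAt)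
      fun x hx => ?_
    rw [interior_Icc] at hx
    exact sub_nonpos.2 (hfg x hx)
  intro x hx
  exact ha ▸ hanti (left_mem_Icc.2 (hx.1.trans hx.2)) hx hx.1

lemma antitoneOn_div_of_wronskian_nonpos {f g : ℝ → ℝ} {a b : ℝ} (hf : Differentiable ℝ f)
    (hg : Differentiable ℝ g) (hne : ∀ x ∈ Icc a b, f x ≠ 0)
    (hW : ∀ x ∈ Icc a b, wronskian f g x ≤ 0) :
    AntitoneOn (fun x => g x / f x) (Icc a b) := by
  have hq (x : ℝ) (hx : x ∈ Icc a b) := hasDerivAt_div_wronskian (hf x) (hg x) (hne x hx)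
  refine antitoneOn_of_hasDerivWithinAt_nonpos (convex_Icc a b)
    (fun x hx => (hq x hx).continuousAt.continuousWithinAt)
    (fun x hx => (hq x (interior_subset hx)).hasDerivWithinAt)
    fun x hx => div_nonpos_of_nonpos_of_nonneg (hW x (interior_subset hx)) (sq_nonneg _)

lemma eqOn_Icc_of_wronskian_nonpos {f g : ℝ → ℝ} {a b : ℝ} (hf : Differentiable ℝ f)
    (hg : Differentiable ℝ g) (hne : ∀ x ∈ Icc a b, f x ≠ 0)
    (hW : ∀ x ∈ Icc a b, wronskian f g x ≤ 0) (ha : f a = g a) (hb : f b = g b) :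
    EqOn f g (Icc a b) := by
  intro x hx
  have hab : a ≤ b := hx.1.trans hx.2
  have hanti := antitoneOn_div_of_wronskian_nonpos hf hg hne hW
  have h_at (y : ℝ) (hy : y ∈ Icc a b) (h : f y = g y) : g y / f y = 1 :=
    h ▸ div_self (h ▸ hne y hy)
  have hx1 : g x / f x = 1 := le_antisymm
    (h_at a (left_mem_Icc.2 hab) ha ▸ hanti (left_mem_Icc.2 hab) hx hx.1)
    (h_at b (right_mem_Icc.2 hab) hb ▸ hanti hx (right_mem_Icc.2 hab) hx.2)
  exact ((div_eq_one_iff_eq (hne x hx)).1 hx1).symm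

lemma eqOn_deriv_of_eqOn_Icc {f g : ℝ → ℝ} {a b : ℝ} (hfg : EqOn f g (Icc a b))
    (hab : a < b) (hf : ContinuousOn (deriv f) (Icc a b))
    (hg : ContinuousOn (deriv g) (Icc a b)) :
    EqOn (deriv f) (deriv g) (Icc a b) :=
  ((hfg.mono Ioo_subset_Icc_self).deriv isOpen_Ioo).of_subset_closure hf hg Ioo_subset_Icc_self
    (closure_Ioo hab.ne).ge

/-- **Equality case of the Sturm comparison theorem (Lemma 1.2 of the paper).**
Let `f, g : [0, π/2] → ℝ` be `C²` with `f 0 = g 0 = 1`, `f' 0 = g' 0 = 0`,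
`f'' + a s * f = 0` with `a s ≤ 1`, `g'' + g = 0`, and `f, g > 0` on `[0, s₁]`
for some `0 < s₁ ≤ π/2`.  If `f s₁ = g s₁`, then `a s = 1` and `f s = g s`
for all `s ∈ [0, s₁]`. -/
theorem sturm_comparison_equality_case
    (f g a : ℝ → ℝ) (s₁ : ℝ)
    (hs₁ : 0 < s₁) (hs₁' : s₁ ≤ Real.pi / 2)
    (hf : ContDiff ℝ 2 f) (hg : ContDiff ℝ 2 g)
    (hf0 : f 0 = 1) (hg0 : g 0 = 1)
    (hf'0 : deriv f 0 = 0) (hg'0 : deriv g 0 = 0)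
    (hfeq : ∀ s ∈ Set.Icc (0 : ℝ) (Real.pi / 2), deriv (deriv f) s + a s * f s = 0)
    (ha : ∀ s ∈ Set.Icc (0 : ℝ) (Real.pi / 2), a s ≤ 1)
    (hgeq : ∀ s ∈ Set.Icc (0 : ℝ) (Real.pi / 2), deriv (deriv g) s + g s = 0)
    (hfpos : ∀ s ∈ Set.Icc (0 : ℝ) s₁, 0 < f s)
    (hgpos : ∀ s ∈ Set.Icc (0 : ℝ) s₁, 0 < g s)
    (heq : f s₁ = g s₁) :
    ∀ s ∈ Set.Icc (0 : ℝ) s₁, a s = 1 ∧ f s = g s := by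
  have hsub : Icc 0 s₁ ⊆ Icc 0 (Real.pi / 2) := Icc_subset_Icc_right hs₁'
  have hW : ∀ s ∈ Icc 0 s₁, wronskian f g s ≤ 0 := by
    refine wronskian_nonpos_of_le hf hg (by simp [wronskian, hf0, hg0, hf'0, hg'0])
      fun s hs => ?_
    have hs' := Ioo_subset_Icc_self hs
    have hfg := mul_nonneg (sub_nonneg.2 (ha s (hsub hs')))
      (mul_pos (hfpos s hs') (hgpos s hs')).le
    rw [eq_neg_of_add_eq_zero_left (hfeq s (hsub hs')),
      eq_neg_of_add_eq_zero_left (hgeq s (hsub hs'))]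
    linarith
  have hfg : EqOn f g (Icc 0 s₁) := eqOn_Icc_of_wronskian_nonpos (hf.differentiable two_ne_zero)
    (hg.differentiable two_ne_zero) (fun s hs => (hfpos s hs).ne') hW (hf0.trans hg0.symm) heq
  have hfg'' : EqOn (deriv (deriv f)) (deriv (deriv g)) (Icc 0 s₁) :=
    eqOn_deriv_of_eqOn_Icc (eqOn_deriv_of_eqOn_Icc hfg hs₁
      (hf.continuous_deriv one_le_two).continuousOn
      (hg.continuous_deriv one_le_two).continuousOn) hs₁
      ((hf.deriv' (n := 1)).continuous_deriv le_rfl).continuousOn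
      ((hg.deriv' (n := 1)).continuous_deriv le_rfl).continuousOn
  intro s hs
  have hf_s := hfeq s (hsub hs)
  have hg_s := hgeq s (hsub hs)
  rw [hfg'' hs, hfg hs] at hf_s
  exact ⟨mul_right_cancel₀ (hgpos s hs).ne' (by linarith), hfg hs⟩
end

section
/- In the Berger 3-sphere (S³, g_η), the Hopf fiber, i.e., the orbit of the one-parameter subgroup t ↦ exp(t·i), is a closed geodesic of length 2πη. -/
noncomputable section

namespace Berger

/-- The Lie algebra `su(2) = Im ℍ` of the unit quaternions `S³`, identified with
`Fin 3 → ℝ` with basis `i = e 0`, `j = e 1`, `k = e 2`; the bracket is the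
quaternionic commutator, so `[i,j] = 2k`, `[j,k] = 2i`, `[k,i] = 2j`. -/
def br (x y : Fin 3 → ℝ) : Fin 3 → ℝ :=
  ![2 * (x 1 * y 2 - x 2 * y 1), 2 * (x 2 * y 0 - x 0 * y 2),
    2 * (x 0 * y 1 - x 1 * y 0)]

/-- The Berger metric `g_η` on the Lie algebra: `i, j, k` are orthogonal,
`‖j‖ = ‖k‖ = 1` and `‖i‖ = η` (the Hopf fibers are scaled by `η`). -/
def g (η : ℝ) (x y : Fin 3 → ℝ) : ℝ :=
  η ^ 2 * (x 0 * y 0) + x 1 * y 1 + x 2 * y 2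

/-- The standard basis `i = e 0`, `j = e 1`, `k = e 2`. -/
def e (a : Fin 3) : Fin 3 → ℝ := fun b => if a = b then 1 else 0

/-- The Levi-Civita connection of the left-invariant metric `g_η`, evaluated on
left-invariant vector fields, determined by the Koszul formula
`2 ⟨∇ₓ y, z⟩ = ⟨[x,y], z⟩ − ⟨[y,z], x⟩ + ⟨[z,x], y⟩`. -/
def nabla (η : ℝ) (x y : Fin 3 → ℝ) : Fin 3 → ℝ := fun a =>
  (g η (br x y) (e a) - g η (br y (e a)) x + g η (br (e a) x) y) /
    (2 * g η (e a) (e a))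

/-- The Riemann curvature tensor on left-invariant fields:
`R(x,y)z = ∇ₓ∇_y z − ∇_y∇ₓ z − ∇_{[x,y]} z`. -/
def R (η : ℝ) (x y z : Fin 3 → ℝ) : Fin 3 → ℝ :=
  nabla η x (nabla η y z) - nabla η y (nabla η x z) - nabla η (br x y) z

/-- The sectional curvature of the plane spanned by `x` and `y` in the Berger
sphere `(S³, g_η)`: `sec(x,y) = ⟨R(x,y)y, x⟩ / (‖x‖²‖y‖² − ⟨x,y⟩²)`. -/
def sec (η : ℝ) (x y : Fin 3 → ℝ) : ℝ :=
  g η (R η x y y) x / (g η x x * g η y y - g η x y ^ 2)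

end Berger

/-- The imaginary quaternion `i`, viewed inside the quaternions. -/
def quaternionI : Quaternion ℝ := ⟨0, 1, 0, 0⟩

/-!
The Koszul formula gives `⟨∇ₓ x, z⟩ = -⟨[x, z], x⟩`. For a vertical vector `x ∈ ℝ i`,
`ad x` maps into the horizontal plane `span (j, k)`, which is `g_η`-orthogonal to `i`,
so `∇ₓ x = 0` and the one-parameter subgroup `exp (t x)` is a geodesic. For a unit
imaginary quaternion `q`, `exp (t q) = cos t + sin t • q`, which returns to `1` at `t = 2π`;
the fiber is traversed at constant speed `‖i‖_{g_η} = η`.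
-/

namespace Berger

theorem nabla_self_eq_zero_of_vertical (η : ℝ) {x : Fin 3 → ℝ} (hx₁ : x 1 = 0)
    (hx₂ : x 2 = 0) : nabla η x x = 0 := by
  funext a
  fin_cases a <;> simp [nabla, br, g, e, hx₁, hx₂]

theorem g_e_zero_self (η : ℝ) : g η (e 0) (e 0) = η ^ 2 := by
  simp [g, e]

end Berger

theorem NormedSpace.periodic_exp_smul {𝔸 : Type*} [NormedRing 𝔸] [NormedAlgebra ℝ 𝔸]
    [CompleteSpace 𝔸] {x : 𝔸} {T : ℝ} (hT : NormedSpace.exp (T • x) = 1) :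
    Function.Periodic (fun t : ℝ => NormedSpace.exp (t • x)) T := fun t => by
  have hball (y : 𝔸) : y ∈ Metric.eball 0 (NormedSpace.expSeries ℝ 𝔸).radius :=
    (NormedSpace.expSeries_radius_eq_top ℝ 𝔸).symm ▸ edist_lt_top _ _
  have hcomm : Commute (t • x) (T • x) := ((Commute.refl x).smul_left t).smul_right T
  simp only [add_smul, NormedSpace.exp_add_of_commute_of_mem_ball hcomm (hball _) (hball _), hT,
    mul_one]

theorem Quaternion.exp_two_pi_smul_of_re_eq_zero {q : Quaternion ℝ} (hre : q.re = 0)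
    (hq : ‖q‖ = 1) : NormedSpace.exp ((2 * Real.pi) • q) = 1 := by
  have hnorm : ‖(2 * Real.pi) • q‖ = 2 * Real.pi := by
    rw [norm_smul, hq, Real.norm_of_nonneg Real.two_pi_pos.le, mul_one]
  rw [Quaternion.exp_of_re_eq_zero _ (by simp [hre]), hnorm]
  simp

theorem quaternionI_re : quaternionI.re = 0 := rfl

theorem norm_quaternionI : ‖quaternionI‖ = 1 := by
  rw [norm_eq_sqrt_real_inner, Quaternion.inner_self, Quaternion.normSq_def']
  simp [quaternionI]

/-- **The Hopf fiber of the Berger sphere (S³, g_η) is a closed geodesic of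
length `2πη`.**  Identify `S³` with the unit quaternions; the Hopf fiber
through `1` is the one-parameter subgroup `t ↦ exp(t·i)`.  For a left-invariant
metric, a one-parameter subgroup `t ↦ exp(t·X)` is a geodesic if and only if
`∇_X X = 0`; we express this via the Levi-Civita connection `Berger.nabla` on
the Lie algebra.  The curve is closed of period `2π`, and since it has constant
speed `‖i‖_{g_η} = η`, its length is `√(g_η(i,i)) · 2π = 2πη`. -/
theorem berger_hopf_fiber_closed_geodesic (η : ℝ) (hη : 0 < η) :
    Berger.nabla η (Berger.e 0) (Berger.e 0) = 0 ∧
      Function.Periodic (fun t : ℝ => NormedSpace.exp (t • quaternionI))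
        (2 * Real.pi) ∧
      Real.sqrt (Berger.g η (Berger.e 0) (Berger.e 0)) * (2 * Real.pi)
        = 2 * Real.pi * η := by
  obtain ⟨hi₁, hi₂⟩ : Berger.e 0 1 = 0 ∧ Berger.e 0 2 = 0 := by simp [Berger.e]
  refine ⟨Berger.nabla_self_eq_zero_of_vertical η hi₁ hi₂,
    NormedSpace.periodic_exp_smul
      (Quaternion.exp_two_pi_smul_of_re_eq_zero quaternionI_re norm_quaternionI), ?_⟩
  rw [Berger.g_e_zero_self, Real.sqrt_sq hη.le, mul_comm]
end
end

section
/- Let u : ℝ → ℝ satisfy u'' + a(t)·u = 0 with a(t) ≤ 1 for all t, u(0) = 0, u'(0) = 1. Then u(t) ≥ sin(t) for all t ∈ [0, π]. -/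
/-!
Sturm's argument with the Wronskian `W = u' sin - u cos` of `u` and `sin`. As long as `u ≥ 0`
and `0 ≤ t ≤ π`, `W' = (u'' + u) sin = (1 - a) u sin ≥ 0` and `W 0 = 0`, so
`(u / sin)' = W / sin² ≥ 0`; since `u / sin → u'(0) = 1` at `0⁺`, this gives `u ≥ sin`.
Applied up to a first zero of `u` in `(0, π)` it would give `0 < sin ≤ u = 0` there, so `u > 0`
on `(0, π)` and the comparison holds on all of `[0, π]`.
-/

open Real Set Filter Topology

theorem tendsto_div_nhdsNE_of_hasDerivAt {𝕜 : Type*} [NontriviallyNormedField 𝕜]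
    {f g : 𝕜 → 𝕜} {f' g' x : 𝕜} (hf : HasDerivAt f f' x) (hg : HasDerivAt g g' x)
    (hfx : f x = 0) (hgx : g x = 0) (hg' : g' ≠ 0) :
    Tendsto (fun t => f t / g t) (𝓝[≠] x) (𝓝 (f' / g')) := by
  rw [hasDerivAt_iff_tendsto_slope] at hf hg
  refine (hf.div hg hg').congr' ?_
  filter_upwards [self_mem_nhdsWithin] with t ht
  simp only [Pi.div_apply, slope_def_field, hfx, hgx, sub_zero]
  exact div_div_div_cancel_right₀ (sub_ne_zero.mpr ht) _ _

theorem MonotoneOn.le_of_tendsto_nhdsGT {β : Type*} [Preorder β] [TopologicalSpace β]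
    [ClosedIicTopology β] {g : ℝ → β} {a b : ℝ} {L : β} (hg : MonotoneOn g (Ioo a b))
    (hlim : Tendsto g (𝓝[>] a) (𝓝 L)) {t : ℝ} (ht : t ∈ Ioo a b) : L ≤ g t := by
  refine le_of_tendsto hlim ?_
  filter_upwards [Ioo_mem_nhdsGT ht.1] with s hs
  exact hg ⟨hs.1, hs.2.trans ht.2⟩ ht hs.2.le

theorem exists_first_nonpos {f : ℝ → ℝ} (hf : Continuous f) (hpos : ∀ᶠ t in 𝓝[>] 0, 0 < f t)
    {t₀ : ℝ} (ht₀ : 0 < t₀) (hft₀ : f t₀ ≤ 0) :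
    ∃ z ∈ Ioc 0 t₀, f z ≤ 0 ∧ ∀ t ∈ Ioo 0 z, 0 < f t := by
  obtain ⟨e, he, hfe⟩ := (nhdsGT_basis (0 : ℝ)).eventually_iff.mp hpos
  have het₀ : e ≤ t₀ := not_lt.mp fun h => (hft₀.trans_lt (hfe ⟨ht₀, h⟩)).false
  have hZ : IsCompact (Icc e t₀ ∩ {t | f t ≤ 0}) :=
    isCompact_Icc.inter_right (isClosed_le hf continuous_const)
  obtain ⟨z, ⟨⟨hez, hzt₀⟩, hfz⟩, hleast⟩ := hZ.exists_isLeast ⟨t₀, ⟨het₀, le_rfl⟩, hft₀⟩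
  refine ⟨z, ⟨he.trans_le hez, hzt₀⟩, hfz, fun t ht => ?_⟩
  rcases lt_or_ge t e with hte | het
  · exact hfe ⟨ht.1, hte⟩
  · exact not_le.mp fun hft => (hleast ⟨⟨het, ht.2.le.trans hzt₀⟩, hft⟩).not_gt ht.2

noncomputable def wronskianSin (u : ℝ → ℝ) (t : ℝ) : ℝ := deriv u t * sin t - u t * cos t

section

variable {u : ℝ → ℝ}

theorem hasDerivAt_wronskianSin (hu : Differentiable ℝ u) (hu' : Differentiable ℝ (deriv u))
    (t : ℝ) : HasDerivAt (wronskianSin u) ((deriv (deriv u) t + u t) * sin t) t :=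
  (((hu' t).hasDerivAt.mul (hasDerivAt_sin t)).sub
    ((hu t).hasDerivAt.mul (hasDerivAt_cos t))).congr_deriv (by ring)

theorem wronskianSin_nonneg (hu : Differentiable ℝ u) (hu' : Differentiable ℝ (deriv u))
    (hu0 : u 0 = 0) {b : ℝ} (hb : b ≤ π) (hsuper : ∀ t ∈ Ioo 0 b, 0 ≤ deriv (deriv u) t + u t)
    {t : ℝ} (ht : t ∈ Icc 0 b) : 0 ≤ wronskianSin u t := by
  have hmono : MonotoneOn (wronskianSin u) (Icc 0 b) := by
    refine monotoneOn_of_hasDerivWithinAt_nonneg (convex_Icc 0 b)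
      (fun t _ => (hasDerivAt_wronskianSin hu hu' t).continuousAt.continuousWithinAt)
      (fun t _ => (hasDerivAt_wronskianSin hu hu' t).hasDerivWithinAt) fun t ht => ?_
    rw [interior_Icc] at ht
    exact mul_nonneg (hsuper t ht) (sin_nonneg_of_nonneg_of_le_pi ht.1.le (ht.2.le.trans hb))
  have hW0 : wronskianSin u 0 = 0 := by simp [wronskianSin, hu0]
  simpa [hW0] using hmono ⟨le_rfl, ht.1.trans ht.2⟩ ht ht.1

theorem monotoneOn_div_sin (hu : Differentiable ℝ u) (hu' : Differentiable ℝ (deriv u))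
    (hu0 : u 0 = 0) {b : ℝ} (hb : b ≤ π) (hsuper : ∀ t ∈ Ioo 0 b, 0 ≤ deriv (deriv u) t + u t) :
    MonotoneOn (fun t => u t / sin t) (Ioo 0 b) := by
  have hderiv : ∀ t ∈ Ioo 0 b,
      HasDerivAt (fun t => u t / sin t) (wronskianSin u t / sin t ^ 2) t := fun t ht =>
    (hu t).hasDerivAt.div (hasDerivAt_sin t) (sin_pos_of_pos_of_lt_pi ht.1 (ht.2.trans_le hb)).ne'
  refine monotoneOn_of_hasDerivWithinAt_nonneg (convex_Ioo 0 b)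
    (fun t ht => (hderiv t ht).continuousAt.continuousWithinAt)
    (fun t ht => (hderiv t (interior_subset ht)).hasDerivWithinAt) fun t ht => ?_
  rw [interior_Ioo] at ht
  exact div_nonneg (wronskianSin_nonneg hu hu' hu0 hb hsuper ⟨ht.1.le, ht.2.le⟩) (sq_nonneg _)

theorem tendsto_div_sin_nhdsGT_zero (hu : Differentiable ℝ u) (hu0 : u 0 = 0)
    (hu'0 : deriv u 0 = 1) : Tendsto (fun t => u t / sin t) (𝓝[>] 0) (𝓝 1) := by
  have := tendsto_div_nhdsNE_of_hasDerivAt (hu 0).hasDerivAt (hasDerivAt_sin 0) hu0 sin_zero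
    (by simp)
  rw [hu'0, cos_zero, div_one] at this
  exact this.mono_left (nhdsWithin_mono _ fun t ht => ne_of_gt ht)

theorem sin_le_of_deriv_deriv_add_self_nonneg (hu : Differentiable ℝ u)
    (hu' : Differentiable ℝ (deriv u)) (hu0 : u 0 = 0) (hu'0 : deriv u 0 = 1) {b : ℝ}
    (hb : b ≤ π) (hsuper : ∀ t ∈ Ioo 0 b, 0 ≤ deriv (deriv u) t + u t) :
    ∀ t ∈ Icc 0 b, sin t ≤ u t := by
  have hIoo : ∀ t ∈ Ioo 0 b, sin t ≤ u t := fun t ht => by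
    have := (monotoneOn_div_sin hu hu' hu0 hb hsuper).le_of_tendsto_nhdsGT
      (tendsto_div_sin_nhdsGT_zero hu hu0 hu'0) ht
    rwa [one_le_div₀ (sin_pos_of_pos_of_lt_pi ht.1 (ht.2.trans_le hb))] at this
  rintro t ⟨ht0, htb⟩
  rcases ht0.eq_or_lt with rfl | ht0
  · simp [hu0]
  have hIcc : Icc 0 t ⊆ {s | sin s ≤ u s} := by
    rw [← closure_Ioo ht0.ne]
    exact closure_minimal (fun s hs => hIoo s ⟨hs.1, hs.2.trans_le htb⟩)
      (isClosed_le continuous_sin hu.continuous)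
  exact hIcc ⟨ht0.le, le_rfl⟩

theorem pos_on_Ioo_zero_pi_of_deriv_deriv_add_self_nonneg (hu : Differentiable ℝ u)
    (hu' : Differentiable ℝ (deriv u)) (hu0 : u 0 = 0) (hu'0 : deriv u 0 = 1)
    (hsuper : ∀ t, 0 ≤ u t → 0 ≤ deriv (deriv u) t + u t) : ∀ t ∈ Ioo 0 π, 0 < u t := by
  intro t₀ ht₀
  by_contra! hut₀
  have hnear : ∀ᶠ t in 𝓝[>] 0, 0 < u t := by
    filter_upwards [(tendsto_div_sin_nhdsGT_zero hu hu0 hu'0).eventually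
      (eventually_gt_nhds one_pos), Ioo_mem_nhdsGT pi_pos] with t hdiv ht
    exact (div_pos_iff_of_pos_right (sin_pos_of_pos_of_lt_pi ht.1 ht.2)).mp hdiv
  obtain ⟨z, ⟨hz0, hzt₀⟩, huz, hpos⟩ := exists_first_nonpos hu.continuous hnear ht₀.1 hut₀
  have hzπ : z < π := hzt₀.trans_lt ht₀.2
  have hsin_le := sin_le_of_deriv_deriv_add_self_nonneg hu hu' hu0 hu'0 hzπ.le
    (fun t ht => hsuper t (hpos t ht).le) z ⟨hz0.le, le_rfl⟩
  linarith [sin_pos_of_pos_of_lt_pi hz0 hzπ]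

end

/-- **Scalar Sturm comparison with Dirichlet initial conditions.**
If `u'' + a t * u = 0` with `a t ≤ 1` for all `t`, `u 0 = 0` and `u' 0 = 1`,
then `u t ≥ sin t` for all `t ∈ [0, π]`. -/
theorem sturm_comparison_dirichlet
    (u a : ℝ → ℝ)
    (hu : ContDiff ℝ 2 u)
    (hueq : ∀ t : ℝ, deriv (deriv u) t + a t * u t = 0)
    (ha : ∀ t : ℝ, a t ≤ 1)
    (hu0 : u 0 = 0) (hu'0 : deriv u 0 = 1) :
    ∀ t ∈ Set.Icc (0 : ℝ) Real.pi, Real.sin t ≤ u t := by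
  have hd : Differentiable ℝ u := hu.differentiable two_ne_zero
  have hd' : Differentiable ℝ (deriv u) := hu.differentiable_deriv_two
  have hsuper : ∀ t, 0 ≤ u t → 0 ≤ deriv (deriv u) t + u t := fun t hut => by
    nlinarith [hueq t, ha t]
  have hpos := pos_on_Ioo_zero_pi_of_deriv_deriv_add_self_nonneg hd hd' hu0 hu'0 hsuper
  exact sin_le_of_deriv_deriv_add_self_nonneg hd hd' hu0 hu'0 le_rfl
    fun t ht => hsuper t (hpos t ht).le
end
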